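/- The subcapturing relation of CC is a preorder: for every capture set C well-formed in Γ, Γ ⊢ C <: C is derivable (reflexivity), and whenever Γ ⊢ C₁ <: C₂ and Γ ⊢ C₂ <: C₃ are derivable, so is Γ ⊢ C₁ <: C₃ (transitivity). -/

import Mathlib

namespace CC

/-- Term variables. -/
abbrev Var := ℕ
/-- Type variables. -/
abbrev TVar := ℕ

/-- Elements of capture sets: term variables or the universal capability `*`. -/
inductive CapElem where
  | star : CapElem
  | cvar : Var → CapElem
deriving DecidableEq

/-- Capture sets: finite sets of variables, possibly containing `*`. -/
abbrev CaptureSet := Finset CapElem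

/-- Rename variable `x` to `y` in a capture set. -/
def CaptureSet.rename (C : CaptureSet) (x y : Var) : CaptureSet :=
  C.image (fun e => if e = .cvar x then .cvar y else e)

/-- Substitute the capture set `D` for the variable `x` in a capture set. -/
def CaptureSet.csubst (C : CaptureSet) (x : Var) (D : CaptureSet) : CaptureSet :=
  if CapElem.cvar x ∈ C then (C.erase (.cvar x)) ∪ D else C

/-- The term variables occurring in a capture set. -/
def CaptureSet.fv (C : CaptureSet) : Finset Var :=
  C.biUnion (fun e => match e with | .cvar x => {x} | .star => ∅)

mutual
/-- Shape types of CC. -/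
inductive ShapeTy where
  | tvar : TVar → ShapeTy                      -- X
  | top : ShapeTy                              -- ⊤
  | arrow : Var → Ty → Ty → ShapeTy            -- ∀(x : U) T
  | tarrow : TVar → ShapeTy → Ty → ShapeTy     -- ∀[X <: S] T
  | boxed : Ty → ShapeTy                       -- □ T
/-- Types of CC: capturing types `C S`; a shape type `S` is identified with `{} S`. -/
inductive Ty where
  | capt : CaptureSet → ShapeTy → Ty
end

/-- A shape type seen as a (pure) type: `S ≡ {} S`. -/
def ShapeTy.asTy (S : ShapeTy) : Ty := .capt ∅ S

/-- The capture set of a type. -/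
def Ty.cv : Ty → CaptureSet
  | .capt C _ => C

mutual
/-- Rename term variable `x` to `y` in a shape type. -/
def ShapeTy.rename : ShapeTy → Var → Var → ShapeTy
  | .tvar X, _, _ => .tvar X
  | .top, _, _ => .top
  | .arrow z U T, x, y =>
      .arrow z (U.rename x y) (if z = x then T else T.rename x y)
  | .tarrow X S T, x, y => .tarrow X (S.rename x y) (T.rename x y)
  | .boxed T, x, y => .boxed (T.rename x y)
/-- Rename term variable `x` to `y` in a type. -/
def Ty.rename : Ty → Var → Var → Ty
  | .capt C S, x, y => .capt (C.rename x y) (S.rename x y)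
end

mutual
/-- Substitute capture set `D` for term variable `x` in a shape type. -/
def ShapeTy.csubst : ShapeTy → Var → CaptureSet → ShapeTy
  | .tvar X, _, _ => .tvar X
  | .top, _, _ => .top
  | .arrow z U T, x, D =>
      .arrow z (U.csubst x D) (if z = x then T else T.csubst x D)
  | .tarrow X S T, x, D => .tarrow X (S.csubst x D) (T.csubst x D)
  | .boxed T, x, D => .boxed (T.csubst x D)
/-- Substitute capture set `D` for term variable `x` in a type. -/
def Ty.csubst : Ty → Var → CaptureSet → Ty
  | .capt C S, x, D => .capt (C.csubst x D) (S.csubst x D)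
end

mutual
/-- Substitute the shape type `P` for the type variable `X` in a shape type. -/
def ShapeTy.tsubst : ShapeTy → TVar → ShapeTy → ShapeTy
  | .tvar Y, X, P => if Y = X then P else .tvar Y
  | .top, _, _ => .top
  | .arrow z U T, X, P => .arrow z (U.tsubst X P) (T.tsubst X P)
  | .tarrow Y S T, X, P =>
      .tarrow Y (S.tsubst X P) (if Y = X then T else T.tsubst X P)
  | .boxed T, X, P => .boxed (T.tsubst X P)
/-- Substitute the shape type `P` for the type variable `X` in a type. -/
def Ty.tsubst : Ty → TVar → ShapeTy → Ty
  | .capt C S, X, P => .capt C (S.tsubst X P)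
end

mutual
/-- Free term variables of a shape type. -/
def ShapeTy.fv : ShapeTy → Finset Var
  | .tvar _ => ∅
  | .top => ∅
  | .arrow z U T => U.fv ∪ (T.fv.erase z)
  | .tarrow _ S T => S.fv ∪ T.fv
  | .boxed T => T.fv
/-- Free term variables of a type. -/
def Ty.fv : Ty → Finset Var
  | .capt C S => C.fv ∪ S.fv
end

/-- Environment bindings: term bindings `x : T` and type bindings `X <: S`. -/
inductive Binding where
  | tm : Var → Ty → Binding
  | tp : TVar → ShapeTy → Binding

/-- Typing environments; the head of the list is the innermost (most recent) binding,
so `Γ,Δ` is written `Δ ++ Γ` and `Γ,x:T` is written `Binding.tm x T :: Γ`. -/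
abbrev Env := List Binding

/-- The term variables bound in an environment. -/
def Env.tmDom : Env → Finset Var
  | [] => ∅
  | .tm x _ :: Γ => insert x (Env.tmDom Γ)
  | .tp _ _ :: Γ => Env.tmDom Γ

/-- Well-formedness of a capture set: `C ⊆ dom(Γ) ∪ {*}`. -/
def WfCs (Γ : Env) (C : CaptureSet) : Prop :=
  ∀ e ∈ C, e = CapElem.star ∨ ∃ x : Var, e = CapElem.cvar x ∧ x ∈ Γ.tmDom

/-- `C ⊆ dom(Γ)` (so `*` is not allowed): side condition of the box/unbox rules. -/
def CsInDom (Γ : Env) (C : CaptureSet) : Prop :=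
  ∀ e ∈ C, ∃ x : Var, e = CapElem.cvar x ∧ x ∈ Γ.tmDom

mutual
/-- Well-formedness of shape types. -/
inductive WfShape : Env → ShapeTy → Prop
  | tvar : ∀ {Γ : Env} {X : TVar} {S : ShapeTy},
      Binding.tp X S ∈ Γ → WfShape Γ (.tvar X)
  | top : ∀ {Γ : Env}, WfShape Γ .top
  | arrow : ∀ {Γ : Env} {x : Var} {U T : Ty},
      WfTy Γ U → WfTy (.tm x U :: Γ) T → WfShape Γ (.arrow x U T)
  | tarrow : ∀ {Γ : Env} {X : TVar} {S : ShapeTy} {T : Ty},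
      WfShape Γ S → WfTy (.tp X S :: Γ) T → WfShape Γ (.tarrow X S T)
  | boxed : ∀ {Γ : Env} {T : Ty}, WfTy Γ T → WfShape Γ (.boxed T)
/-- Well-formedness of types. -/
inductive WfTy : Env → Ty → Prop
  | capt : ∀ {Γ : Env} {C : CaptureSet} {S : ShapeTy},
      WfCs Γ C → WfShape Γ S → WfTy Γ (.capt C S)
end

/-- The subcapturing relation `Γ ⊢ C₁ <: C₂`. -/
inductive Subcapt : Env → CaptureSet → CaptureSet → Prop
  | elem : ∀ {Γ : Env} {e : CapElem} {C : CaptureSet},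
      e ∈ C → Subcapt Γ {e} C
  | var : ∀ {Γ : Env} {x : Var} {C' : CaptureSet} {S : ShapeTy} {C : CaptureSet},
      Binding.tm x (.capt C' S) ∈ Γ → Subcapt Γ C' C →
      Subcapt Γ {CapElem.cvar x} C
  | set : ∀ {Γ : Env} {C₁ C : CaptureSet},
      (∀ e ∈ C₁, Subcapt Γ {e} C) → Subcapt Γ C₁ C

/-- The subtyping relation `Γ ⊢ T₁ <: T₂`; a shape type `S` is identified with `{} S`. -/
inductive Sub : Env → Ty → Ty → Prop
  | refl : ∀ {Γ : Env} {T : Ty}, Sub Γ T T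
  | trans : ∀ {Γ : Env} {T₁ T₂ T₃ : Ty},
      Sub Γ T₁ T₂ → Sub Γ T₂ T₃ → Sub Γ T₁ T₃
  | top : ∀ {Γ : Env} {S : ShapeTy}, Sub Γ S.asTy ShapeTy.top.asTy
  | tvar : ∀ {Γ : Env} {X : TVar} {S : ShapeTy},
      Binding.tp X S ∈ Γ → Sub Γ (ShapeTy.tvar X).asTy S.asTy
  | arrow : ∀ {Γ : Env} {x : Var} {U₁ U₂ T₁ T₂ : Ty},
      Sub Γ U₂ U₁ → Sub (.tm x U₂ :: Γ) T₁ T₂ →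
      Sub Γ (ShapeTy.arrow x U₁ T₁).asTy (ShapeTy.arrow x U₂ T₂).asTy
  | tarrow : ∀ {Γ : Env} {X : TVar} {S₁ S₂ : ShapeTy} {T₁ T₂ : Ty},
      Sub Γ S₂.asTy S₁.asTy → Sub (.tp X S₂ :: Γ) T₁ T₂ →
      Sub Γ (ShapeTy.tarrow X S₁ T₁).asTy (ShapeTy.tarrow X S₂ T₂).asTy
  | boxed : ∀ {Γ : Env} {T₁ T₂ : Ty},
      Sub Γ T₁ T₂ → Sub Γ (ShapeTy.boxed T₁).asTy (ShapeTy.boxed T₂).asTy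
  | capt : ∀ {Γ : Env} {C₁ C₂ : CaptureSet} {S₁ S₂ : ShapeTy},
      Subcapt Γ C₁ C₂ → Sub Γ S₁.asTy S₂.asTy →
      Sub Γ (.capt C₁ S₁) (.capt C₂ S₂)

/-- Terms of CC, in monadic normal form. -/
inductive Tm where
  | var : Var → Tm                          -- x
  | abs : Var → Ty → Tm → Tm                -- λ(x : T) t
  | tabs : TVar → ShapeTy → Tm → Tm         -- λ[X <: S] t
  | box : Var → Tm                          -- □ x
  | app : Var → Var → Tm                    -- x y
  | tapp : Var → ShapeTy → Tm               -- x [S]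
  | letin : Var → Tm → Tm → Tm              -- let x = s in t
  | unbox : CaptureSet → Var → Tm           -- C ∘- x

/-- Values: term abstractions, type abstractions and boxes. -/
def Tm.isValue : Tm → Bool
  | .abs _ _ _ => true
  | .tabs _ _ _ => true
  | .box _ => true
  | _ => false

/-- Answers: variables or values. -/
def Tm.isAnswer : Tm → Bool
  | .var _ => true
  | t => t.isValue

/-- The captured variables `cv(t)` of a term. -/
def Tm.cv : Tm → CaptureSet
  | .var x => {CapElem.cvar x}
  | .abs x _ t => t.cv.erase (.cvar x)
  | .tabs _ _ t => t.cv
  | .box _ => ∅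
  | .app x y => {CapElem.cvar x, CapElem.cvar y}
  | .tapp x _ => {CapElem.cvar x}
  | .letin x s t =>
      if s.isValue = true ∧ CapElem.cvar x ∉ t.cv then t.cv
      else s.cv ∪ (t.cv.erase (.cvar x))
  | .unbox C x => insert (CapElem.cvar x) C

/-- Free term variables of a term. -/
def Tm.fv : Tm → Finset Var
  | .var x => {x}
  | .abs x T t => T.fv ∪ (t.fv.erase x)
  | .tabs _ S t => S.fv ∪ t.fv
  | .box x => {x}
  | .app x y => {x, y}
  | .tapp x S => insert x S.fv
  | .letin x s t => s.fv ∪ (t.fv.erase x)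
  | .unbox C x => insert x C.fv

/-- Rename term variable `x` to `y` in a term. -/
def Tm.rename : Tm → Var → Var → Tm
  | .var z, x, y => if z = x then .var y else .var z
  | .abs z T t, x, y => .abs z (T.rename x y) (if z = x then t else t.rename x y)
  | .tabs X S t, x, y => .tabs X (S.rename x y) (t.rename x y)
  | .box z, x, y => if z = x then .box y else .box z
  | .app z w, x, y => .app (if z = x then y else z) (if w = x then y else w)
  | .tapp z S, x, y => .tapp (if z = x then y else z) (S.rename x y)
  | .letin z s t, x, y =>
      .letin z (s.rename x y) (if z = x then t else t.rename x y)
  | .unbox C z, x, y => .unbox (C.rename x y) (if z = x then y else z)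

/-- Substitute shape type `P` for type variable `X` in a term. -/
def Tm.tsubst : Tm → TVar → ShapeTy → Tm
  | .var z, _, _ => .var z
  | .abs z T t, X, P => .abs z (T.tsubst X P) (t.tsubst X P)
  | .tabs Y S t, X, P => .tabs Y (S.tsubst X P) (if Y = X then t else t.tsubst X P)
  | .box z, _, _ => .box z
  | .app z w, _, _ => .app z w
  | .tapp z S, X, P => .tapp z (S.tsubst X P)
  | .letin z s t, X, P => .letin z (s.tsubst X P) (t.tsubst X P)
  | .unbox C z, _, _ => .unbox C z

/-- The typing relation `Γ ⊢ t : T`. -/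
inductive HasType : Env → Tm → Ty → Prop
  | var : ∀ {Γ : Env} {x : Var} {C : CaptureSet} {S : ShapeTy},
      Binding.tm x (.capt C S) ∈ Γ →
      HasType Γ (.var x) (.capt {CapElem.cvar x} S)
  | sub : ∀ {Γ : Env} {t : Tm} {T U : Ty},
      HasType Γ t T → Sub Γ T U → WfTy Γ U → HasType Γ t U
  | abs : ∀ {Γ : Env} {x : Var} {U T : Ty} {t : Tm},
      HasType (.tm x U :: Γ) t T → WfTy Γ U →
      HasType Γ (.abs x U t) (.capt (t.cv.erase (.cvar x)) (.arrow x U T))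
  | tabs : ∀ {Γ : Env} {X : TVar} {S : ShapeTy} {T : Ty} {t : Tm},
      HasType (.tp X S :: Γ) t T → WfShape Γ S →
      HasType Γ (.tabs X S t) (.capt t.cv (.tarrow X S T))
  | app : ∀ {Γ : Env} {x y z : Var} {C : CaptureSet} {U T : Ty},
      HasType Γ (.var x) (.capt C (.arrow z U T)) → HasType Γ (.var y) U →
      HasType Γ (.app x y) (T.rename z y)
  | tapp : ∀ {Γ : Env} {x : Var} {X : TVar} {C : CaptureSet} {S : ShapeTy} {T : Ty},
      HasType Γ (.var x) (.capt C (.tarrow X S T)) →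
      HasType Γ (.tapp x S) (T.tsubst X S)
  | box : ∀ {Γ : Env} {x : Var} {C : CaptureSet} {S : ShapeTy},
      HasType Γ (.var x) (.capt C S) → CsInDom Γ C →
      HasType Γ (.box x) (ShapeTy.boxed (.capt C S)).asTy
  | unbox : ∀ {Γ : Env} {x : Var} {C : CaptureSet} {S : ShapeTy},
      HasType Γ (.var x) (ShapeTy.boxed (.capt C S)).asTy → CsInDom Γ C →
      HasType Γ (.unbox C x) (.capt C S)
  | letin : ∀ {Γ : Env} {x : Var} {s t : Tm} {T U : Ty},
      HasType Γ s T → HasType (.tm x T :: Γ) t U → x ∉ U.fv →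
      HasType Γ (.letin x s t) U

/-- Store contexts `σ ::= [] | let x = v in σ`, outermost binding first. -/
abbrev Store := List (Var × Tm)

/-- Plugging a term into a store context. -/
def Store.plug : Store → Tm → Tm
  | [], t => t
  | (x, v) :: σ, t => .letin x v (Store.plug σ t)

/-- A store context binds only values. -/
def Store.IsStore (σ : Store) : Prop := ∀ p ∈ σ, (p.2).isValue = true

/-- Looking up the value bound to a variable in a store (innermost binding first). -/
def Store.lookup : Store → Var → Option Tm
  | [], _ => none
  | (y, v) :: σ, x =>
      match Store.lookup σ x with
      | some w => some w
      | none => if y = x then some v else none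

/-- Evaluation contexts `e ::= [] | let x = e in t`, outermost layer first. -/
abbrev EvalCtx := List (Var × Tm)

/-- Plugging a term into an evaluation context. -/
def EvalCtx.plug : EvalCtx → Tm → Tm
  | [], s => s
  | (x, t) :: e, s => .letin x (EvalCtx.plug e s) t

/-- Small-step reduction of CC. -/
inductive Step : Tm → Tm → Prop
  | apply : ∀ {σ : Store} {e : EvalCtx} {x y z : Var} {T : Ty} {t : Tm},
      σ.IsStore → σ.lookup x = some (.abs z T t) →
      Step (σ.plug (e.plug (.app x y))) (σ.plug (e.plug (t.rename z y)))
  | tapply : ∀ {σ : Store} {e : EvalCtx} {x : Var} {X : TVar} {S' S : ShapeTy} {t : Tm},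
      σ.IsStore → σ.lookup x = some (.tabs X S' t) →
      Step (σ.plug (e.plug (.tapp x S))) (σ.plug (e.plug (t.tsubst X S)))
  | open_ : ∀ {σ : Store} {e : EvalCtx} {x y : Var} {C : CaptureSet},
      σ.IsStore → σ.lookup x = some (.box y) →
      Step (σ.plug (e.plug (.unbox C x))) (σ.plug (e.plug (.var y)))
  | rename : ∀ {σ : Store} {e : EvalCtx} {x y : Var} {t : Tm},
      σ.IsStore →
      Step (σ.plug (e.plug (.letin x (.var y) t))) (σ.plug (e.plug (t.rename x y)))
  | lift : ∀ {σ : Store} {e : EvalCtx} {x : Var} {v t : Tm},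
      σ.IsStore → e ≠ [] → v.isValue = true →
      Step (σ.plug (e.plug (.letin x v t))) (σ.plug (.letin x v (e.plug t)))

/-- Matching environment: `Γ ⊢ σ ∼ Δ`. -/
inductive Matches : Env → Store → Env → Prop
  | nil : ∀ {Γ : Env}, Matches Γ [] []
  | cons : ∀ {Γ : Env} {x : Var} {v : Tm} {T : Ty} {σ : Store} {Δ : Env},
      v.isValue = true → HasType Γ v T → x ∉ T.fv →
      Matches (.tm x T :: Γ) σ Δ →
      Matches Γ ((x, v) :: σ) (Δ ++ [Binding.tm x T])

end CC

namespace CC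

/-- All variables of a term (free variables, binders, and annotation variables). -/
def Tm.allVars : Tm → Finset Var
  | .var x => {x}
  | .abs x T t => insert x (T.fv ∪ t.allVars)
  | .tabs _ S t => S.fv ∪ t.allVars
  | .box x => {x}
  | .app x y => {x, y}
  | .tapp x S => insert x S.fv
  | .letin x s t => insert x (s.allVars ∪ t.allVars)
  | .unbox C x => insert x C.fv

/-- All variables occurring in an evaluation context. -/
def EvalCtx.vars (e : EvalCtx) : Finset Var :=
  e.foldr (fun p acc => insert p.1 (p.2.allVars ∪ acc)) ∅

/-- Evaluation context typing `Γ ⊢ e : U ⇒ T`, meaning `Γ,x:U ⊢ e[x] : T`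
for a fresh variable `x`. -/
def EvalCtxTyping (Γ : Env) (e : EvalCtx) (U T : Ty) : Prop :=
  ∀ x : Var, x ∉ Γ.tmDom → x ∉ e.vars → x ∉ U.fv → x ∉ T.fv →
    HasType (Binding.tm x U :: Γ) (e.plug (.var x)) T

/-- Substitute capture set `D` for variable `x` in a binding. -/
def Binding.csubst : Binding → Var → CaptureSet → Binding
  | .tm y T, x, D => .tm y (T.csubst x D)
  | .tp X S, x, D => .tp X (S.csubst x D)

/-- Substitute capture set `D` for variable `x` in an environment. -/
def Env.csubst (Δ : Env) (x : Var) (D : CaptureSet) : Env :=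
  Δ.map (fun b => b.csubst x D)

/-- Rename term variable `x` to `y` in a binding. -/
def Binding.rename : Binding → Var → Var → Binding
  | .tm z T, x, y => .tm z (T.rename x y)
  | .tp X S, x, y => .tp X (S.rename x y)

/-- Rename term variable `x` to `y` in an environment. -/
def Env.rename (Δ : Env) (x y : Var) : Env :=
  Δ.map (fun b => b.rename x y)

/-- Substitute shape type `P` for type variable `X` in a binding. -/
def Binding.tsubst : Binding → TVar → ShapeTy → Binding
  | .tm z T, X, P => .tm z (T.tsubst X P)
  | .tp Y S, X, P => .tp Y (S.tsubst X P)

/-- Substitute shape type `P` for type variable `X` in an environment. -/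
def Env.tsubst (Δ : Env) (X : TVar) (P : ShapeTy) : Env :=
  Δ.map (fun b => b.tsubst X P)

mutual
/-- `S.avoid x Dp Dn` replaces the variable `x` by `Dp` in covariant capture-set
positions and by `Dn` in contravariant capture-set positions of `S`. -/
def ShapeTy.avoid : ShapeTy → Var → CaptureSet → CaptureSet → ShapeTy
  | .tvar X, _, _, _ => .tvar X
  | .top, _, _, _ => .top
  | .arrow z U T, x, Dp, Dn =>
      .arrow z (U.avoid x Dn Dp) (if z = x then T else T.avoid x Dp Dn)
  | .tarrow X S T, x, Dp, Dn => .tarrow X (S.avoid x Dn Dp) (T.avoid x Dp Dn)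
  | .boxed T, x, Dp, Dn => .boxed (T.avoid x Dp Dn)
/-- `T.avoid x Dp Dn` replaces the variable `x` by `Dp` in covariant capture-set
positions and by `Dn` in contravariant capture-set positions of `T`. -/
def Ty.avoid : Ty → Var → CaptureSet → CaptureSet → Ty
  | .capt C S, x, Dp, Dn => .capt (C.csubst x Dp) (S.avoid x Dp Dn)
end

/-- `T` is the most specific (minimal w.r.t. subtyping) type of `t` in `Γ`. -/
def MostSpecificTyping (Γ : Env) (t : Tm) (T : Ty) : Prop :=
  HasType Γ t T ∧ ∀ T' : Ty, HasType Γ t T' → Sub Γ T T'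

/-- A platform: a store context binding only closed values. -/
def Platform (Ψ : Store) : Prop :=
  ∀ p ∈ Ψ, (p.2).isValue = true ∧ (p.2).fv = ∅

/-- `Ψ[t]` is a well-typed program: `Ψ` is a platform, `⊢ Ψ ∼ Δ`, `Δ ⊢ t : T`,
and every capability introduced by `Ψ` has capture set `{*}` in `Δ`. -/
def WellTypedProgram (Ψ : Store) (t : Tm) : Prop :=
  Platform Ψ ∧
  ∃ (Δ : Env) (T : Ty), Matches [] Ψ Δ ∧ HasType Δ t T ∧
    ∀ x ∈ Ψ.map Prod.fst, ∃ S : ShapeTy,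
      Binding.tm x (Ty.capt {CapElem.star} S) ∈ Δ

end CC

namespace CC.Subcapt

variable {Γ : Env}

theorem of_subset {C₁ C₂ : CaptureSet} (h : C₁ ⊆ C₂) : Subcapt Γ C₁ C₂ :=
  set fun _ he => elem (h he)

theorem singleton_of_mem {C₁ C₂ : CaptureSet} {e : CapElem}
    (h : Subcapt Γ C₁ C₂) (he : e ∈ C₁) : Subcapt Γ {e} C₂ := by
  induction h with
  | elem hmem => rw [Finset.mem_singleton.1 he]; exact elem hmem
  | var hx hC _ => rw [Finset.mem_singleton.1 he]; exact var hx hC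
  | set _ ih => exact ih e he (Finset.mem_singleton_self e)

theorem trans {C₁ C₂ C₃ : CaptureSet}
    (h₁ : Subcapt Γ C₁ C₂) (h₂ : Subcapt Γ C₂ C₃) : Subcapt Γ C₁ C₃ := by
  induction h₁ with
  | elem hmem => exact h₂.singleton_of_mem hmem
  | var hx _ ih => exact var hx (ih h₂)
  | set _ ih => exact set fun e he => ih e he h₂

end CC.Subcapt

/-- Subcapturing is a preorder: it is reflexive on capture sets
well-formed in `Γ` and transitive. -/
theorem CC.subcapt_preorder (Γ : CC.Env) :
    (∀ C : CC.CaptureSet, CC.WfCs Γ C → CC.Subcapt Γ C C) ∧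
    (∀ C₁ C₂ C₃ : CC.CaptureSet,
      CC.Subcapt Γ C₁ C₂ → CC.Subcapt Γ C₂ C₃ → CC.Subcapt Γ C₁ C₃) :=
  ⟨fun _ _ => .of_subset subset_rfl, fun _ _ _ => .trans⟩
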